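/- arXiv:1812.07496 — 2 statements merged into one kernel-verified Lean document; each statement's English description precedes it below -/
import Mathlib

section
/- For fixed λ ∈ (0, π) with 2jλ not a multiple of 2π, (1/n²)·X_j(λ)ᵀ D_j X_j(λ) → (j/4)·I₂ as n → ∞, where X_j(λ) has t-th row (cos(jλt), sin(jλt)) and D_j = diag(j, 2j, …, nj). -/
open Matrix Real Filter Finset

lemma abel_identity (c : ℕ → ℝ) (n : ℕ) :
    ∑ t ∈ range n, ((t:ℝ)+1) * c t
      = n * (∑ t ∈ range n, c t) - ∑ k ∈ range n, (∑ t ∈ range k, c t) := by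
  induction n with
  | zero => simp
  | succ n ih =>
      rw [Finset.sum_range_succ, ih, Finset.sum_range_succ (f := fun k => ∑ t ∈ range k, c t),
        Finset.sum_range_succ (f := c)]
      push_cast
      ring

lemma weighted_tendsto_zero (c : ℕ → ℝ) (M : ℝ)
    (hM : ∀ n, |∑ t ∈ range n, c t| ≤ M) :
    Tendsto (fun n : ℕ => ((n:ℝ)^2)⁻¹ * ∑ t ∈ range n, ((t:ℝ)+1) * c t) atTop (nhds 0) := by
  have hM0 : 0 ≤ M := le_trans (abs_nonneg _) (hM 0)
  apply squeeze_zero_norm (a := fun n : ℕ => 2 * M / n)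
  · intro n
    rcases Nat.eq_zero_or_pos n with h | h
    · subst h; simp
    have hb : |∑ t ∈ range n, ((t:ℝ)+1) * c t| ≤ 2 * n * M := by
      rw [abel_identity]
      calc |(n:ℝ) * (∑ t ∈ range n, c t) - ∑ k ∈ range n, (∑ t ∈ range k, c t)|
          ≤ |(n:ℝ) * (∑ t ∈ range n, c t)| + |∑ k ∈ range n, (∑ t ∈ range k, c t)| :=
            abs_sub _ _
        _ ≤ (n:ℝ) * M + n * M := by
            apply add_le_add
            · rw [abs_mul, abs_of_nonneg (by positivity : (0:ℝ) ≤ (n:ℝ))]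
              exact mul_le_mul_of_nonneg_left (hM n) (Nat.cast_nonneg n)
            · calc |∑ k ∈ range n, (∑ t ∈ range k, c t)|
                  ≤ ∑ k ∈ range n, |∑ t ∈ range k, c t| := Finset.abs_sum_le_sum_abs _ _
                _ ≤ ∑ k ∈ range n, M := Finset.sum_le_sum fun k _ => hM k
                _ = n * M := by simp [mul_comm]
        _ = 2 * n * M := by ring
    have hn : (0:ℝ) < n := by exact_mod_cast h
    rw [norm_mul, norm_inv]
    calc ‖(n:ℝ)^2‖⁻¹ * ‖∑ t ∈ range n, ((t:ℝ)+1) * c t‖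
        ≤ ((n:ℝ)^2)⁻¹ * (2 * n * M) := by
          rw [Real.norm_eq_abs, abs_of_nonneg (by positivity : (0:ℝ) ≤ (n:ℝ)^2)]
          gcongr
          exact hb
      _ = 2 * M / n := by field_simp
  · have := Filter.Tendsto.const_div_atTop (g := fun n : ℕ => (n:ℝ)) tendsto_natCast_atTop_atTop (2*M)
    simpa using this

lemma bounded_trig (β : ℝ) (h : ∀ m : ℤ, β ≠ 2*π*m) :
    ∃ M : ℝ, ∀ n, |∑ t ∈ range n, Real.cos (β*((t:ℝ)+1))| ≤ M
      ∧ |∑ t ∈ range n, Real.sin (β*((t:ℝ)+1))| ≤ M := by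
  set z : ℂ := Complex.exp (β * Complex.I) with hz
  have hz1 : z ≠ 1 := by
    intro hzz
    rw [hz, Complex.exp_eq_one_iff] at hzz
    obtain ⟨m, hm⟩ := hzz
    apply h m
    have h2 := congrArg Complex.im hm
    simp [Complex.mul_im, Complex.ofReal_mul] at h2
    linarith [h2]
  refine ⟨2 / ‖z - 1‖, fun n => ?_⟩
  have hsum : ∑ t ∈ range n, (z^(t+1)) = z * ((z^n - 1)/(z - 1)) := by
    calc ∑ t ∈ range n, z^(t+1) = ∑ t ∈ range n, z * z^t := by simp [pow_succ']
      _ = z * ∑ t ∈ range n, z^t := (Finset.mul_sum _ _ _).symm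
      _ = z * ((z^n - 1)/(z - 1)) := by rw [geom_sum_eq hz1]
  have hnormz : ‖z‖ = 1 := by
    rw [hz]; exact Complex.norm_exp_ofReal_mul_I β
  have hbound : ‖∑ t ∈ range n, z^(t+1)‖ ≤ 2 / ‖z - 1‖ := by
    rw [hsum, norm_mul, hnormz, one_mul, norm_div]
    gcongr
    calc ‖z^n - 1‖ ≤ ‖z^n‖ + 1 := by
          simpa using norm_sub_le (z^n) 1
      _ = 2 := by rw [norm_pow, hnormz]; norm_num
  have hre : ∀ t : ℕ, (z^(t+1)).re = Real.cos (β*((t:ℝ)+1)) := by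
    intro t
    rw [hz, ← Complex.exp_nat_mul]
    have : (t+1 : ℕ) * (↑β * Complex.I) = (↑(β * ((t:ℝ)+1)) : ℂ) * Complex.I := by
      push_cast; ring
    rw [show ((t+1 : ℕ) : ℂ) * (↑β * Complex.I) = (↑(β * ((t:ℝ)+1)) : ℂ) * Complex.I by push_cast; ring]
    exact Complex.exp_ofReal_mul_I_re _
  have him : ∀ t : ℕ, (z^(t+1)).im = Real.sin (β*((t:ℝ)+1)) := by
    intro t
    rw [hz, ← Complex.exp_nat_mul]
    rw [show ((t+1 : ℕ) : ℂ) * (↑β * Complex.I) = (↑(β * ((t:ℝ)+1)) : ℂ) * Complex.I by push_cast; ring]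
    exact Complex.exp_ofReal_mul_I_im _
  constructor
  · calc |∑ t ∈ range n, Real.cos (β*((t:ℝ)+1))|
        = |(∑ t ∈ range n, z^(t+1)).re| := by rw [Complex.re_sum]; simp_rw [hre]
      _ ≤ ‖∑ t ∈ range n, z^(t+1)‖ := Complex.abs_re_le_norm _
      _ ≤ _ := hbound
  · calc |∑ t ∈ range n, Real.sin (β*((t:ℝ)+1))|
        = |(∑ t ∈ range n, z^(t+1)).im| := by rw [Complex.im_sum]; simp_rw [him]
      _ ≤ ‖∑ t ∈ range n, z^(t+1)‖ := Complex.abs_im_le_norm _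
      _ ≤ _ := hbound

lemma gauss_tendsto :
    Tendsto (fun n : ℕ => ((n:ℝ)^2)⁻¹ * ∑ t ∈ range n, ((t:ℝ)+1)) atTop (nhds (1/2)) := by
  have hsum : ∀ n : ℕ, ∑ t ∈ range n, ((t:ℝ)+1) = n * (n+1) / 2 := by
    intro n
    induction n with
    | zero => simp
    | succ n ih => rw [Finset.sum_range_succ, ih]; push_cast; ring
  have heq : ∀ᶠ n : ℕ in atTop, ((n:ℝ)^2)⁻¹ * ∑ t ∈ range n, ((t:ℝ)+1)
      = (1 + (n:ℝ)⁻¹) / 2 := by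
    filter_upwards [eventually_gt_atTop 0] with n hn
    have hn' : (0:ℝ) < n := by exact_mod_cast hn
    rw [hsum]
    field_simp
  rw [Filter.tendsto_congr' heq]
  have : Tendsto (fun n : ℕ => (n:ℝ)⁻¹) atTop (nhds 0) := tendsto_inv_atTop_zero.comp tendsto_natCast_atTop_atTop
  have := ((tendsto_const_nhds (x := (1:ℝ))).add this).div_const 2
  simpa using this

lemma master (a b : ℝ) (c : ℕ → ℝ) (M : ℝ)
    (hM : ∀ n, |∑ t ∈ range n, c t| ≤ M) :
    Tendsto (fun n : ℕ => ((n:ℝ)^2)⁻¹ * ∑ t ∈ range n, ((t:ℝ)+1) * (a + b * c t))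
      atTop (nhds (a/2)) := by
  have hMb : ∀ n, |∑ t ∈ range n, b * c t| ≤ |b| * M := by
    intro n
    rw [← Finset.mul_sum, abs_mul]
    exact mul_le_mul_of_nonneg_left (hM n) (abs_nonneg b)
  have h2 := weighted_tendsto_zero (fun t => b * c t) (|b| * M) hMb
  have h1 := gauss_tendsto.const_mul a
  have heq : ∀ n : ℕ, ((n:ℝ)^2)⁻¹ * ∑ t ∈ range n, ((t:ℝ)+1) * (a + b * c t)
      = a * (((n:ℝ)^2)⁻¹ * ∑ t ∈ range n, ((t:ℝ)+1))
        + ((n:ℝ)^2)⁻¹ * ∑ t ∈ range n, ((t:ℝ)+1) * (b * c t) := by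
    intro n
    simp only [Finset.mul_sum, mul_add, ← Finset.sum_add_distrib]
    exact Finset.sum_congr rfl fun t _ => by ring
  simp_rw [heq]
  have := h1.add h2
  simpa [div_eq_mul_inv] using this


/-- The `n × 2` design matrix with `t`-th row `(cos(jλt), sin(jλt))`, `t = 1, …, n`. -/
noncomputable def Xdesign (n j : ℕ) (lam : ℝ) : Matrix (Fin n) (Fin 2) ℝ :=
  Matrix.of fun t i =>
    if i = 0 then Real.cos ((j : ℝ) * lam * ((t : ℝ) + 1))
    else Real.sin ((j : ℝ) * lam * ((t : ℝ) + 1))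

/-- The `n × n` diagonal matrix `diag(j, 2j, …, nj)`. -/
noncomputable def Ddiag (n j : ℕ) : Matrix (Fin n) (Fin n) ℝ :=
  Matrix.diagonal fun t => ((t : ℝ) + 1) * j

lemma entry_eq (n j : ℕ) (lam : ℝ) (i k : Fin 2) :
    ((Xdesign n j lam)ᵀ * Ddiag n j * Xdesign n j lam) i k
    = ∑ t ∈ range n, ((t:ℝ)+1) * ((j:ℝ) *
        ((if i = 0 then Real.cos ((j : ℝ) * lam * ((t : ℝ) + 1)) else Real.sin ((j : ℝ) * lam * ((t : ℝ) + 1))) *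
         (if k = 0 then Real.cos ((j : ℝ) * lam * ((t : ℝ) + 1)) else Real.sin ((j : ℝ) * lam * ((t : ℝ) + 1))))) := by
  rw [Matrix.mul_assoc, Matrix.mul_apply]
  simp only [Ddiag, Matrix.diagonal_mul, Xdesign, Matrix.transpose_apply, Matrix.of_apply]
  rw [← Fin.sum_univ_eq_sum_range]
  exact Finset.sum_congr rfl fun t _ => by ring

theorem stmt_15 (lam : ℝ) (hlam0 : 0 < lam) (hlamπ : lam < π) (j : ℕ) (hj : 0 < j)
    (hmult : ¬ ∃ m : ℤ, (2 * j : ℝ) * lam = 2 * π * m) :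
    Tendsto (fun n : ℕ => (((n : ℝ) ^ 2)⁻¹) • ((Xdesign n j lam)ᵀ * Ddiag n j * Xdesign n j lam))
      atTop (nhds (((j : ℝ) / 4) • (1 : Matrix (Fin 2) (Fin 2) ℝ))) := by
  set β : ℝ := 2 * (j:ℝ) * lam with hβ
  have hβne : ∀ m : ℤ, β ≠ 2*π*m := by
    intro m hm
    exact hmult ⟨m, hm⟩
  obtain ⟨M, hM⟩ := bounded_trig β hβne
  have hMc : ∀ n, |∑ t ∈ range n, Real.cos (β*((t:ℝ)+1))| ≤ M := fun n => (hM n).1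
  have hMs : ∀ n, |∑ t ∈ range n, Real.sin (β*((t:ℝ)+1))| ≤ M := fun n => (hM n).2
  have hdouble : ∀ t : ℕ, β*((t:ℝ)+1) = 2 * ((j:ℝ) * lam * ((t:ℝ)+1)) := by
    intro t; rw [hβ]; ring
  refine tendsto_pi_nhds.2 ?_
  intro i
  rw [tendsto_pi_nhds]
  intro k
  have hsmul : ∀ n : ℕ, ((((n : ℝ) ^ 2)⁻¹) • ((Xdesign n j lam)ᵀ * Ddiag n j * Xdesign n j lam)) i k
      = (((n:ℝ)^2)⁻¹) * (((Xdesign n j lam)ᵀ * Ddiag n j * Xdesign n j lam) i k) := fun n => rfl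
  simp_rw [hsmul, entry_eq]
  fin_cases i <;> fin_cases k <;>
    simp only [Fin.zero_eta, Fin.mk_one, Matrix.smul_apply, Matrix.one_apply, smul_eq_mul,
      Fin.isValue, if_true, reduceIte, mul_one, mul_zero, one_ne_zero, zero_ne_one]
  · -- (0,0)
    have h2 := master ((j:ℝ)/2) ((j:ℝ)/2) (fun t => Real.cos (β*((t:ℝ)+1))) M hMc
    rw [show (j:ℝ)/2/2 = (j:ℝ)/4 by ring] at h2
    refine Filter.Tendsto.congr (fun n => ?_) h2
    congr 1
    apply Finset.sum_congr rfl
    intro t _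
    have hc := Real.cos_sq ((j:ℝ) * lam * ((t:ℝ)+1))
    rw [← hdouble t] at hc
    linear_combination (-(((t:ℝ)+1)*(j:ℝ)))*hc
  · -- (0,1)
    have h2 := master 0 ((j:ℝ)/2) (fun t => Real.sin (β*((t:ℝ)+1))) M hMs
    rw [show (0:ℝ)/2 = 0 by norm_num] at h2
    refine Filter.Tendsto.congr (fun n => ?_) h2
    congr 1
    apply Finset.sum_congr rfl
    intro t _
    have hs := Real.sin_two_mul ((j:ℝ) * lam * ((t:ℝ)+1))
    rw [← hdouble t] at hs
    linear_combination (((t:ℝ)+1)*(j:ℝ)/2)*hs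
  · -- (1,0)
    have h2 := master 0 ((j:ℝ)/2) (fun t => Real.sin (β*((t:ℝ)+1))) M hMs
    rw [show (0:ℝ)/2 = 0 by norm_num] at h2
    refine Filter.Tendsto.congr (fun n => ?_) h2
    congr 1
    apply Finset.sum_congr rfl
    intro t _
    have hs := Real.sin_two_mul ((j:ℝ) * lam * ((t:ℝ)+1))
    rw [← hdouble t] at hs
    linear_combination (((t:ℝ)+1)*(j:ℝ)/2)*hs
  · -- (1,1)
    have h2 := master ((j:ℝ)/2) (-((j:ℝ)/2)) (fun t => Real.cos (β*((t:ℝ)+1))) M hMc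
    rw [show (j:ℝ)/2/2 = (j:ℝ)/4 by ring] at h2
    refine Filter.Tendsto.congr (fun n => ?_) h2
    congr 1
    apply Finset.sum_congr rfl
    intro t _
    have hc := Real.cos_sq ((j:ℝ) * lam * ((t:ℝ)+1))
    have hs := Real.sin_sq ((j:ℝ) * lam * ((t:ℝ)+1))
    rw [← hdouble t] at hc
    linear_combination (-(((t:ℝ)+1)*(j:ℝ)))*hs + (((t:ℝ)+1)*(j:ℝ))*hc
end

section
/- For fixed λ ∈ (0, π) with 2jλ not a multiple of 2π, (1/n³)·X_j(λ)ᵀ D_j² X_j(λ) → (j²/6)·I₂ as n → ∞, with X_j(λ) and D_j as above. -/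
open Matrix Real Filter

lemma osc_complex (φ : ℝ) (hφ : ∀ m : ℤ, φ ≠ 2 * π * m) :
    Tendsto (fun n : ℕ => ((n : ℝ) ^ 3)⁻¹ •
      ∑ t ∈ Finset.range n, ((t : ℂ) + 1) ^ 2 * Complex.exp (φ * Complex.I) ^ (t + 1))
      atTop (nhds 0) := by
  set z : ℂ := Complex.exp (φ * Complex.I) with hzdef
  have hz1 : ‖z‖ = 1 := by
    simp [hzdef, Complex.norm_exp_ofReal_mul_I]
  have hzne : z ≠ 1 := by
    intro h
    rw [hzdef, Complex.exp_eq_one_iff] at h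
    obtain ⟨m, hm⟩ := h
    apply hφ m
    have h2 : (φ : ℂ) * Complex.I = ((2 * π * m : ℝ) : ℂ) * Complex.I := by
      rw [hm]; push_cast; ring
    have h3 : (φ : ℂ) = ((2 * π * m : ℝ) : ℂ) :=
      mul_right_cancel₀ Complex.I_ne_zero h2
    exact_mod_cast h3
  have hdpos : 0 < ‖z - 1‖ := by
    rw [norm_pos_iff]; exact sub_ne_zero.mpr hzne
  set M : ℝ := 2 / ‖z - 1‖ with hM
  have hM0 : 0 ≤ M := by positivity
  have hG : ∀ n : ℕ, ‖∑ t ∈ Finset.range n, z ^ (t + 1)‖ ≤ M := by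
    intro n
    have hs : ∑ t ∈ Finset.range n, z ^ (t + 1) = z * ((z ^ n - 1) / (z - 1)) := by
      rw [← geom_sum_eq hzne, Finset.mul_sum]
      exact Finset.sum_congr rfl fun t _ => by ring
    rw [hs, norm_mul, hz1, one_mul, norm_div, hM]
    gcongr
    calc ‖z ^ n - 1‖ ≤ ‖z ^ n‖ + ‖(1 : ℂ)‖ := norm_sub_le _ _
      _ = 2 := by rw [norm_pow, hz1]; norm_num
  have hS : ∀ n : ℕ, ‖∑ t ∈ Finset.range n, ((t : ℂ) + 1) ^ 2 * z ^ (t + 1)‖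
      ≤ M * (4 * (n : ℝ) ^ 2) := by
    intro n
    rcases Nat.eq_zero_or_pos n with hn | hn
    · simp [hn]
    have habel := Finset.sum_range_by_parts (fun i : ℕ => ((i : ℂ) + 1) ^ 2)
      (fun i : ℕ => z ^ (i + 1)) n
    simp only [smul_eq_mul] at habel
    rw [habel]
    have h1 : ‖(((n - 1 : ℕ) : ℂ) + 1) ^ 2 * ∑ i ∈ Finset.range n, z ^ (i + 1)‖
        ≤ (n : ℝ) ^ 2 * M := by
      rw [norm_mul]
      have he : (((n - 1 : ℕ) : ℂ) + 1) = ((n : ℕ) : ℂ) := by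
        rw [← Nat.cast_add_one, Nat.sub_add_cancel hn]
      rw [he, norm_pow, Complex.norm_natCast]
      exact mul_le_mul_of_nonneg_left (hG n) (by positivity)
    have h2 : ‖∑ i ∈ Finset.range (n - 1),
        ((((i + 1 : ℕ) : ℂ) + 1) ^ 2 - ((i : ℂ) + 1) ^ 2) * ∑ k ∈ Finset.range (i + 1), z ^ (k + 1)‖
        ≤ (n : ℝ) * ((2 * n + 1) * M) := by
      calc ‖∑ i ∈ Finset.range (n - 1),
            ((((i + 1 : ℕ) : ℂ) + 1) ^ 2 - ((i : ℂ) + 1) ^ 2) * ∑ k ∈ Finset.range (i + 1), z ^ (k + 1)‖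
          ≤ ∑ i ∈ Finset.range (n - 1),
            ‖((((i + 1 : ℕ) : ℂ) + 1) ^ 2 - ((i : ℂ) + 1) ^ 2) * ∑ k ∈ Finset.range (i + 1), z ^ (k + 1)‖ :=
            norm_sum_le _ _
        _ ≤ ∑ i ∈ Finset.range (n - 1), ((2 * n + 1) * M) := by
            apply Finset.sum_le_sum
            intro i hi
            rw [norm_mul]
            have hi' : i < n - 1 := Finset.mem_range.mp hi
            have hdiff : ((((i + 1 : ℕ) : ℂ) + 1) ^ 2 - ((i : ℂ) + 1) ^ 2)
                = ((2 * i + 3 : ℕ) : ℂ) := by push_cast; ring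
            rw [hdiff, Complex.norm_natCast]
            have hle : ((2 * i + 3 : ℕ) : ℝ) ≤ 2 * (n : ℝ) + 1 := by
              have : i + 1 ≤ n - 1 + 1 := by omega
              have hin : (i : ℝ) ≤ (n : ℝ) - 1 := by
                have : i ≤ n - 1 := by omega
                have h' : (i:ℝ) ≤ ((n-1 : ℕ):ℝ) := by exact_mod_cast this
                have : ((n - 1 : ℕ) : ℝ) = (n : ℝ) - 1 := by
                  have : (1:ℕ) ≤ n := hn
                  push_cast [this]; ring
                linarith [this ▸ h']
              push_cast; linarith
            exact mul_le_mul hle (hG _) (norm_nonneg _) (by positivity)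
        _ ≤ (n : ℝ) * ((2 * n + 1) * M) := by
            rw [Finset.sum_const, nsmul_eq_mul]
            apply mul_le_mul_of_nonneg_right _ (by positivity)
            simp only [Finset.card_range]
            exact_mod_cast Nat.sub_le n 1
    calc ‖_ - _‖ ≤ _ + _ := norm_sub_le _ _
      _ ≤ (n : ℝ) ^ 2 * M + (n : ℝ) * ((2 * n + 1) * M) := add_le_add h1 h2
      _ ≤ M * (4 * (n : ℝ) ^ 2) := by
          have hn1 : (1 : ℝ) ≤ n := by exact_mod_cast hn
          nlinarith [mul_le_mul_of_nonneg_right (show (n:ℝ) ≤ (n:ℝ)^2 by nlinarith) hM0]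
  apply squeeze_zero_norm (a := fun n : ℕ => 4 * M * ((n : ℝ))⁻¹)
  · intro n
    rcases Nat.eq_zero_or_pos n with hn | hn
    · simp [hn]
    rw [norm_smul]
    have hnR : (0 : ℝ) < n := by exact_mod_cast hn
    calc ‖((n : ℝ) ^ 3)⁻¹‖ * ‖∑ t ∈ Finset.range n, ((t : ℂ) + 1) ^ 2 * z ^ (t + 1)‖
        ≤ ((n : ℝ) ^ 3)⁻¹ * (M * (4 * (n : ℝ) ^ 2)) := by
          rw [Real.norm_eq_abs, abs_of_nonneg (by positivity)]
          exact mul_le_mul_of_nonneg_left (hS n) (by positivity)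
      _ = 4 * M * ((n : ℝ))⁻¹ := by field_simp
  · have h0 : Tendsto (fun n : ℕ => ((n : ℝ))⁻¹) atTop (nhds 0) :=
      tendsto_inv_atTop_zero.comp tendsto_natCast_atTop_atTop
    simpa using h0.const_mul (4 * M)

lemma term_eq (φ : ℝ) (t : ℕ) :
    ((t : ℂ) + 1) ^ 2 * Complex.exp (φ * Complex.I) ^ (t + 1)
      = (((((t : ℝ) + 1) ^ 2 : ℝ)) : ℂ) * Complex.exp ((φ * ((t : ℝ) + 1) : ℝ) * Complex.I) := by
  rw [← Complex.exp_nat_mul]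
  congr 1
  · push_cast; ring
  · push_cast; ring

lemma osc_cos (φ : ℝ) (hφ : ∀ m : ℤ, φ ≠ 2 * π * m) :
    Tendsto (fun n : ℕ => ((n : ℝ) ^ 3)⁻¹ *
      ∑ t ∈ Finset.range n, ((t : ℝ) + 1) ^ 2 * Real.cos (φ * ((t : ℝ) + 1)))
      atTop (nhds 0) := by
  have h := (Complex.continuous_re.tendsto 0).comp (osc_complex φ hφ)
  simp only [Complex.zero_re] at h
  convert h using 2 with n
  simp only [Function.comp_apply, Complex.smul_re, Complex.re_sum, term_eq φ]
  congr 1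
  apply Finset.sum_congr rfl
  intro t _
  rw [Complex.re_ofReal_mul, Complex.exp_ofReal_mul_I_re]

lemma osc_sin (φ : ℝ) (hφ : ∀ m : ℤ, φ ≠ 2 * π * m) :
    Tendsto (fun n : ℕ => ((n : ℝ) ^ 3)⁻¹ *
      ∑ t ∈ Finset.range n, ((t : ℝ) + 1) ^ 2 * Real.sin (φ * ((t : ℝ) + 1)))
      atTop (nhds 0) := by
  have h := (Complex.continuous_im.tendsto 0).comp (osc_complex φ hφ)
  simp only [Complex.zero_im] at h
  convert h using 2 with n
  simp only [Function.comp_apply, Complex.smul_im, Complex.im_sum, term_eq φ]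
  congr 1
  apply Finset.sum_congr rfl
  intro t _
  rw [Complex.im_ofReal_mul, Complex.exp_ofReal_mul_I_im]

lemma sum_sq_eq (n : ℕ) :
    ∑ t ∈ Finset.range n, ((t : ℝ) + 1) ^ 2
      = (n : ℝ) * ((n : ℝ) + 1) * (2 * (n : ℝ) + 1) / 6 := by
  induction n with
  | zero => simp
  | succ k ih => rw [Finset.sum_range_succ, ih]; push_cast; ring

lemma tendsto_avg_sq :
    Tendsto (fun n : ℕ => ((n : ℝ) ^ 3)⁻¹ * ∑ t ∈ Finset.range n, ((t : ℝ) + 1) ^ 2)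
      atTop (nhds (1 / 3)) := by
  have h0 : Tendsto (fun n : ℕ => ((n : ℝ))⁻¹) atTop (nhds 0) :=
    tendsto_inv_atTop_zero.comp tendsto_natCast_atTop_atTop
  have hlim : Tendsto (fun n : ℕ => (1 + ((n : ℝ))⁻¹) * (2 + ((n : ℝ))⁻¹) / 6)
      atTop (nhds (1 / 3)) := by
    have h := ((h0.const_add 1).mul (h0.const_add 2)).div_const 6
    norm_num at h
    convert h using 2 <;> norm_num
  apply hlim.congr'
  filter_upwards [eventually_ge_atTop 1] with n hn
  have hnR : (0 : ℝ) < n := by exact_mod_cast hn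
  have hne : (n : ℝ) ≠ 0 := ne_of_gt hnR
  rw [sum_sq_eq]
  field_simp

theorem stmt_16 (lam : ℝ) (hlam0 : 0 < lam) (hlamπ : lam < π) (j : ℕ) (hj : 0 < j)
    (hmult : ¬ ∃ m : ℤ, (2 * j : ℝ) * lam = 2 * π * m) :
    Tendsto (fun n : ℕ =>
        (((n : ℝ) ^ 3)⁻¹) • ((Xdesign n j lam)ᵀ * (Ddiag n j * Ddiag n j) * Xdesign n j lam))
      atTop (nhds (((j : ℝ) ^ 2 / 6) • (1 : Matrix (Fin 2) (Fin 2) ℝ))) := by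
  set θ : ℝ := (j : ℝ) * lam with hθ
  set φ : ℝ := 2 * θ with hφdef
  have hφ : ∀ m : ℤ, φ ≠ 2 * π * m := by
    intro m h
    exact hmult ⟨m, by rw [← h, hφdef, hθ]; ring⟩
  have hent : ∀ (n : ℕ) (i k : Fin 2),
      ((Xdesign n j lam)ᵀ * (Ddiag n j * Ddiag n j) * Xdesign n j lam) i k
        = ∑ t ∈ Finset.range n,
            (if i = 0 then Real.cos (θ * ((t : ℝ) + 1)) else Real.sin (θ * ((t : ℝ) + 1)))
            * ((((t : ℝ) + 1) * j) ^ 2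
            * (if k = 0 then Real.cos (θ * ((t : ℝ) + 1)) else Real.sin (θ * ((t : ℝ) + 1)))) := by
    intro n i k
    rw [← Fin.sum_univ_eq_sum_range (fun t : ℕ =>
      (if i = 0 then Real.cos (θ * ((t : ℝ) + 1)) else Real.sin (θ * ((t : ℝ) + 1)))
      * ((((t : ℝ) + 1) * j) ^ 2
      * (if k = 0 then Real.cos (θ * ((t : ℝ) + 1)) else Real.sin (θ * ((t : ℝ) + 1))))) n]
    rw [Ddiag, Matrix.diagonal_mul_diagonal, Matrix.mul_apply]
    apply Finset.sum_congr rfl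
    intro t _
    rw [Matrix.mul_diagonal, Matrix.transpose_apply]
    simp only [Xdesign, Matrix.of_apply]
    rw [hθ]
    ring_nf
  have hsmul : ∀ (n : ℕ) (i k : Fin 2),
      ((((n : ℝ) ^ 3)⁻¹) • ((Xdesign n j lam)ᵀ * (Ddiag n j * Ddiag n j) * Xdesign n j lam)) i k
        = ((n : ℝ) ^ 3)⁻¹ *
          (((Xdesign n j lam)ᵀ * (Ddiag n j * Ddiag n j) * Xdesign n j lam) i k) := by
    intro n i k; rfl
  have h00 : Tendsto (fun n : ℕ =>
      ((((n : ℝ) ^ 3)⁻¹) • ((Xdesign n j lam)ᵀ * (Ddiag n j * Ddiag n j) * Xdesign n j lam))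
        (0 : Fin 2) (0 : Fin 2)) atTop (nhds ((j : ℝ) ^ 2 / 6)) := by
    have hcong : ∀ n : ℕ,
        ((((n : ℝ) ^ 3)⁻¹) • ((Xdesign n j lam)ᵀ * (Ddiag n j * Ddiag n j) * Xdesign n j lam)) 0 0
          = (j : ℝ) ^ 2 / 2 * (((n : ℝ) ^ 3)⁻¹ * ∑ t ∈ Finset.range n, ((t : ℝ) + 1) ^ 2)
            + (j : ℝ) ^ 2 / 2 * (((n : ℝ) ^ 3)⁻¹
              * ∑ t ∈ Finset.range n, ((t : ℝ) + 1) ^ 2 * Real.cos (φ * ((t : ℝ) + 1))) := by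
      intro n
      rw [hsmul, hent]
      simp only [show ((0 : Fin 2) = 0) = True by simp, show ((1 : Fin 2) = 0) = False by simp,
        if_true, if_false]
      rw [show (j : ℝ) ^ 2 / 2 * (((n : ℝ) ^ 3)⁻¹ * ∑ t ∈ Finset.range n, ((t : ℝ) + 1) ^ 2)
            + (j : ℝ) ^ 2 / 2 * (((n : ℝ) ^ 3)⁻¹
              * ∑ t ∈ Finset.range n, ((t : ℝ) + 1) ^ 2 * Real.cos (φ * ((t : ℝ) + 1)))
          = ((n : ℝ) ^ 3)⁻¹ * ((j : ℝ) ^ 2 / 2 * ∑ t ∈ Finset.range n, ((t : ℝ) + 1) ^ 2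
            + (j : ℝ) ^ 2 / 2 * ∑ t ∈ Finset.range n, ((t : ℝ) + 1) ^ 2 * Real.cos (φ * ((t : ℝ) + 1)))
          by ring]
      congr 1
      rw [Finset.mul_sum, Finset.mul_sum, ← Finset.sum_add_distrib]
      apply Finset.sum_congr rfl
      intro t _
      have hx := Real.cos_sq (θ * ((t : ℝ) + 1))
      rw [show Real.cos (θ * ((t : ℝ) + 1)) * ((((t : ℝ) + 1) * j) ^ 2 * Real.cos (θ * ((t : ℝ) + 1)))
          = (((t : ℝ) + 1) * j) ^ 2 * Real.cos (θ * ((t : ℝ) + 1)) ^ 2 by ring, hx]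
      rw [show φ * ((t : ℝ) + 1) = 2 * (θ * ((t : ℝ) + 1)) by rw [hφdef]; ring]
      ring
    rw [show (j : ℝ) ^ 2 / 6 = (j : ℝ) ^ 2 / 2 * (1 / 3) + (j : ℝ) ^ 2 / 2 * 0 by ring]
    exact Tendsto.congr (fun n => (hcong n).symm)
      ((tendsto_avg_sq.const_mul _).add ((osc_cos φ hφ).const_mul _))
  have h01 : Tendsto (fun n : ℕ =>
      ((((n : ℝ) ^ 3)⁻¹) • ((Xdesign n j lam)ᵀ * (Ddiag n j * Ddiag n j) * Xdesign n j lam))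
        (0 : Fin 2) (1 : Fin 2)) atTop (nhds ((0 : ℝ))) := by
    have hcong : ∀ n : ℕ,
        ((((n : ℝ) ^ 3)⁻¹) • ((Xdesign n j lam)ᵀ * (Ddiag n j * Ddiag n j) * Xdesign n j lam)) 0 1
          = (j : ℝ) ^ 2 / 2 * (((n : ℝ) ^ 3)⁻¹
              * ∑ t ∈ Finset.range n, ((t : ℝ) + 1) ^ 2 * Real.sin (φ * ((t : ℝ) + 1))) := by
      intro n
      rw [hsmul, hent]
      simp only [show ((0 : Fin 2) = 0) = True by simp, show ((1 : Fin 2) = 0) = False by simp,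
        if_true, if_false]
      rw [show (j : ℝ) ^ 2 / 2 * (((n : ℝ) ^ 3)⁻¹
              * ∑ t ∈ Finset.range n, ((t : ℝ) + 1) ^ 2 * Real.sin (φ * ((t : ℝ) + 1)))
          = ((n : ℝ) ^ 3)⁻¹ * ((j : ℝ) ^ 2 / 2
              * ∑ t ∈ Finset.range n, ((t : ℝ) + 1) ^ 2 * Real.sin (φ * ((t : ℝ) + 1))) by ring]
      congr 1
      rw [Finset.mul_sum]
      apply Finset.sum_congr rfl
      intro t _
      rw [show φ * ((t : ℝ) + 1) = 2 * (θ * ((t : ℝ) + 1)) by rw [hφdef]; ring,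
        Real.sin_two_mul]
      ring
    rw [show (0 : ℝ) = (j : ℝ) ^ 2 / 2 * 0 by ring]
    exact Tendsto.congr (fun n => (hcong n).symm) ((osc_sin φ hφ).const_mul _)
  have h10 : Tendsto (fun n : ℕ =>
      ((((n : ℝ) ^ 3)⁻¹) • ((Xdesign n j lam)ᵀ * (Ddiag n j * Ddiag n j) * Xdesign n j lam))
        (1 : Fin 2) (0 : Fin 2)) atTop (nhds ((0 : ℝ))) := by
    have hcong : ∀ n : ℕ,
        ((((n : ℝ) ^ 3)⁻¹) • ((Xdesign n j lam)ᵀ * (Ddiag n j * Ddiag n j) * Xdesign n j lam)) 1 0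
          = (j : ℝ) ^ 2 / 2 * (((n : ℝ) ^ 3)⁻¹
              * ∑ t ∈ Finset.range n, ((t : ℝ) + 1) ^ 2 * Real.sin (φ * ((t : ℝ) + 1))) := by
      intro n
      rw [hsmul, hent]
      simp only [show ((0 : Fin 2) = 0) = True by simp, show ((1 : Fin 2) = 0) = False by simp,
        if_true, if_false]
      rw [show (j : ℝ) ^ 2 / 2 * (((n : ℝ) ^ 3)⁻¹
              * ∑ t ∈ Finset.range n, ((t : ℝ) + 1) ^ 2 * Real.sin (φ * ((t : ℝ) + 1)))
          = ((n : ℝ) ^ 3)⁻¹ * ((j : ℝ) ^ 2 / 2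
              * ∑ t ∈ Finset.range n, ((t : ℝ) + 1) ^ 2 * Real.sin (φ * ((t : ℝ) + 1))) by ring]
      congr 1
      rw [Finset.mul_sum]
      apply Finset.sum_congr rfl
      intro t _
      rw [show φ * ((t : ℝ) + 1) = 2 * (θ * ((t : ℝ) + 1)) by rw [hφdef]; ring,
        Real.sin_two_mul]
      ring
    rw [show (0 : ℝ) = (j : ℝ) ^ 2 / 2 * 0 by ring]
    exact Tendsto.congr (fun n => (hcong n).symm) ((osc_sin φ hφ).const_mul _)
  have h11 : Tendsto (fun n : ℕ =>
      ((((n : ℝ) ^ 3)⁻¹) • ((Xdesign n j lam)ᵀ * (Ddiag n j * Ddiag n j) * Xdesign n j lam))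
        (1 : Fin 2) (1 : Fin 2)) atTop (nhds ((j : ℝ) ^ 2 / 6)) := by
    have hcong : ∀ n : ℕ,
        ((((n : ℝ) ^ 3)⁻¹) • ((Xdesign n j lam)ᵀ * (Ddiag n j * Ddiag n j) * Xdesign n j lam)) 1 1
          = (j : ℝ) ^ 2 / 2 * (((n : ℝ) ^ 3)⁻¹ * ∑ t ∈ Finset.range n, ((t : ℝ) + 1) ^ 2)
            - (j : ℝ) ^ 2 / 2 * (((n : ℝ) ^ 3)⁻¹
              * ∑ t ∈ Finset.range n, ((t : ℝ) + 1) ^ 2 * Real.cos (φ * ((t : ℝ) + 1))) := by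
      intro n
      rw [hsmul, hent]
      simp only [show ((0 : Fin 2) = 0) = True by simp, show ((1 : Fin 2) = 0) = False by simp,
        if_true, if_false]
      rw [show (j : ℝ) ^ 2 / 2 * (((n : ℝ) ^ 3)⁻¹ * ∑ t ∈ Finset.range n, ((t : ℝ) + 1) ^ 2)
            - (j : ℝ) ^ 2 / 2 * (((n : ℝ) ^ 3)⁻¹
              * ∑ t ∈ Finset.range n, ((t : ℝ) + 1) ^ 2 * Real.cos (φ * ((t : ℝ) + 1)))
          = ((n : ℝ) ^ 3)⁻¹ * ((j : ℝ) ^ 2 / 2 * ∑ t ∈ Finset.range n, ((t : ℝ) + 1) ^ 2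
            - (j : ℝ) ^ 2 / 2 * ∑ t ∈ Finset.range n, ((t : ℝ) + 1) ^ 2 * Real.cos (φ * ((t : ℝ) + 1)))
          by ring]
      congr 1
      rw [Finset.mul_sum, Finset.mul_sum, ← Finset.sum_sub_distrib]
      apply Finset.sum_congr rfl
      intro t _
      have hx := Real.sin_sq_eq_half_sub (θ * ((t : ℝ) + 1))
      rw [show Real.sin (θ * ((t : ℝ) + 1)) * ((((t : ℝ) + 1) * j) ^ 2 * Real.sin (θ * ((t : ℝ) + 1)))
          = (((t : ℝ) + 1) * j) ^ 2 * Real.sin (θ * ((t : ℝ) + 1)) ^ 2 by ring, hx]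
      rw [show φ * ((t : ℝ) + 1) = 2 * (θ * ((t : ℝ) + 1)) by rw [hφdef]; ring]
      ring
    rw [show (j : ℝ) ^ 2 / 6 = (j : ℝ) ^ 2 / 2 * (1 / 3) - (j : ℝ) ^ 2 / 2 * 0 by ring]
    exact Tendsto.congr (fun n => (hcong n).symm)
      ((tendsto_avg_sq.const_mul _).sub ((osc_cos φ hφ).const_mul _))
  refine tendsto_pi_nhds.mpr ?_
  intro i
  refine tendsto_pi_nhds.mpr ?_
  intro k
  fin_cases i <;> fin_cases k
  · convert h00 using 2
    simp [Matrix.smul_apply, Matrix.one_apply]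
    show (((j : ℝ) ^ 2 / 6) • (1 : Matrix (Fin 2) (Fin 2) ℝ)) 0 0 = _
    simp [Matrix.smul_apply, Matrix.one_apply]
  · convert h01 using 2
    simp [Matrix.smul_apply, Matrix.one_apply]
    show (((j : ℝ) ^ 2 / 6) • (1 : Matrix (Fin 2) (Fin 2) ℝ)) 0 1 = _
    simp [Matrix.smul_apply, Matrix.one_apply]
  · convert h10 using 2
    simp [Matrix.smul_apply, Matrix.one_apply]
    show (((j : ℝ) ^ 2 / 6) • (1 : Matrix (Fin 2) (Fin 2) ℝ)) 1 0 = _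
    simp [Matrix.smul_apply, Matrix.one_apply]
  · convert h11 using 2
    simp [Matrix.smul_apply, Matrix.one_apply]
    show (((j : ℝ) ^ 2 / 6) • (1 : Matrix (Fin 2) (Fin 2) ℝ)) 1 1 = _
    simp [Matrix.smul_apply, Matrix.one_apply]
end
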